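/- arXiv:2211.12581 — 4 statements merged into one kernel-verified Lean document; each statement's English description precedes it below -/
import Mathlib

section
/- (Knuth's theorem, 1975.) Let k ≥ 1, let N be a finite full k-ary tree, and let w : List (Fin k) → ℝ assign a weight w(n) to each node n ∈ N. Then the expectation, over a uniformly random root-to-leaf path, of the sum ∑_{i=0}^{ℓ} k^{i} w(n_i) over the nodes n_0, …, n_ℓ on the path equals the total weight of the tree. Formally: ∑_{v ∈ Leaves(N)} (1/k)^{|v|} · ( ∑_{u prefix of v} k^{|u|} w(u) ) = ∑_{n ∈ N} w(n), where the inner sum ranges over all prefixes u of v (including the empty word and v itself). -/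
/-- A finite full `k`-ary tree: a finite set of words over `Fin k` containing the
empty word, closed under prefixes, and such that every node either has all `k`
one-letter extensions in the set (internal node) or none of them (leaf). -/
def IsFullTree (k : ℕ) (N : Finset (List (Fin k))) : Prop :=
  ([] : List (Fin k)) ∈ N ∧
  (∀ n ∈ N, ∀ m : List (Fin k), m <+: n → m ∈ N) ∧
  (∀ n ∈ N, (∀ i : Fin k, n ++ [i] ∈ N) ∨ (∀ i : Fin k, n ++ [i] ∉ N))

/-- The leaves of `N`: nodes none of whose one-letter extensions lie in `N`. -/
def leaves (k : ℕ) (N : Finset (List (Fin k))) : Finset (List (Fin k)) :=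
  N.filter (fun n => ∀ i : Fin k, n ++ [i] ∉ N)

/-- The internal nodes of `N`: nodes all of whose one-letter extensions lie in `N`. -/
def internals (k : ℕ) (N : Finset (List (Fin k))) : Finset (List (Fin k)) :=
  N.filter (fun n => ∀ i : Fin k, n ++ [i] ∈ N)

lemma leaf_filter_eq (k : ℕ) (N : Finset (List (Fin k)))
    (hpre : ∀ n ∈ N, ∀ m : List (Fin k), m <+: n → m ∈ N)
    (u : List (Fin k)) (huN : u ∈ N) (huleaf : ∀ i : Fin k, u ++ [i] ∉ N) :
    (leaves k N).filter (fun v => u <+: v) = {u} := by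
  ext v
  simp only [Finset.mem_filter, leaves, Finset.mem_singleton]
  constructor
  · rintro ⟨⟨hvN, hvleaf⟩, ⟨t, ht⟩⟩
    cases t with
    | nil => simpa using ht.symm
    | cons i t' =>
      exfalso
      apply huleaf i
      apply hpre v hvN
      exact ⟨t', by simpa using ht⟩
  · rintro rfl
    exact ⟨⟨huN, huleaf⟩, List.prefix_refl _⟩

lemma key (k : ℕ) (hk : 1 ≤ k) (N : Finset (List (Fin k))) (hN : IsFullTree k N) :
    ∀ u ∈ N, ∑ v ∈ (leaves k N).filter (fun v => u <+: v), ((1:ℝ)/k) ^ v.length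
      = (1/(k:ℝ)) ^ u.length := by
  obtain ⟨hroot, hpre, hfull⟩ := hN
  set D := N.sup List.length with hD
  suffices H : ∀ d : ℕ, ∀ u ∈ N, D - u.length ≤ d →
      ∑ v ∈ (leaves k N).filter (fun v => u <+: v), ((1:ℝ)/k) ^ v.length
        = (1/(k:ℝ)) ^ u.length by
    exact fun u hu => H (D - u.length) u hu le_rfl
  intro d
  induction d with
  | zero =>
    intro u hu hd
    rcases hfull u hu with hint | hleaf
    · exfalso
      have hi : u ++ [(⟨0, hk⟩ : Fin k)] ∈ N := hint ⟨0, hk⟩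
      have : (u ++ [(⟨0, hk⟩ : Fin k)]).length ≤ D := Finset.le_sup hi
      simp at this
      omega
    · rw [leaf_filter_eq k N hpre u hu hleaf, Finset.sum_singleton]
  | succ d IH =>
    intro u hu hd
    rcases hfull u hu with hint | hleaf
    · have hsplit : (leaves k N).filter (fun v => u <+: v)
          = Finset.univ.biUnion (fun i : Fin k => (leaves k N).filter (fun v => u ++ [i] <+: v)) := by
        ext v
        simp only [Finset.mem_filter, Finset.mem_biUnion, Finset.mem_univ, true_and]
        constructor
        · rintro ⟨hv, t, ht⟩
          cases t with
          | nil =>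
            exfalso
            have hvu : v = u := by simpa using ht.symm
            subst hvu
            simp only [leaves, Finset.mem_filter] at hv
            exact hv.2 ⟨0, hk⟩ (hint ⟨0, hk⟩)
          | cons i t' => exact ⟨i, hv, ⟨t', by simpa using ht⟩⟩
        · rintro ⟨i, hv, ht⟩
          exact ⟨hv, (List.prefix_append u [i]).trans ht⟩
      rw [hsplit, Finset.sum_biUnion]
      · have hchild : ∀ i : Fin k,
            ∑ v ∈ (leaves k N).filter (fun v => u ++ [i] <+: v), ((1:ℝ)/k) ^ v.length
              = (1/(k:ℝ)) ^ (u.length + 1) := by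
          intro i
          have hiN : u ++ [i] ∈ N := hint i
          have hlen : (u ++ [i]).length ≤ D := Finset.le_sup hiN
          simp only [List.length_append, List.length_singleton] at hlen
          have hdd : D - (u ++ [i]).length ≤ d := by
            simp only [List.length_append, List.length_singleton]
            omega
          have := IH (u ++ [i]) hiN hdd
          simpa using this
        rw [Finset.sum_congr rfl (fun i _ => hchild i)]
        rw [Finset.sum_const, Finset.card_univ, Fintype.card_fin]
        have hk0 : (k:ℝ) ≠ 0 := by positivity
        rw [pow_succ]
        field_simp
        ring_nf
        rw [mul_inv_cancel₀ hk0, one_mul]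
      · intro i _ j _ hij
        simp only [Finset.disjoint_left, Finset.mem_filter]
        rintro v ⟨hv, ti, hti⟩ ⟨_, tj, htj⟩
        apply hij
        have h : u ++ ([i] ++ ti) = u ++ ([j] ++ tj) := by
          rw [← List.append_assoc, ← List.append_assoc, hti, htj]
        have h2 : ([i] ++ ti : List (Fin k)) = [j] ++ tj := List.append_cancel_left h
        simpa using congrArg (fun l => l.head?) h2
    · rw [leaf_filter_eq k N hpre u hu hleaf, Finset.sum_singleton]

/-- Knuth's theorem (1975): the expectation, over a uniformly random root-to-leaf
path `n_0, …, n_ℓ` (the prefixes `v.take i` of the leaf `v`), of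
`∑_{i=0}^{ℓ} k^i w(n_i)` equals the total weight `∑_{n ∈ N} w(n)` of the tree. -/
theorem knuth_theorem (k : ℕ) (hk : 1 ≤ k)
    (N : Finset (List (Fin k))) (hN : IsFullTree k N)
    (w : List (Fin k) → ℝ) :
    ∑ v ∈ leaves k N, (1 / (k : ℝ)) ^ v.length *
        (∑ i ∈ Finset.range (v.length + 1), (k : ℝ) ^ i * w (v.take i))
      = ∑ n ∈ N, w n := by
  obtain ⟨hroot, hpre, hfull⟩ := hN
  have hk0 : (k:ℝ) ≠ 0 := by positivity
  have step1 : ∀ v ∈ leaves k N,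
      ∑ i ∈ Finset.range (v.length + 1), (k : ℝ) ^ i * w (v.take i)
        = ∑ u ∈ N.filter (fun u => u <+: v), (k:ℝ) ^ u.length * w u := by
    intro v hv
    have hvN : v ∈ N := (Finset.mem_filter.mp hv).1
    refine Finset.sum_nbij' (fun i => v.take i) (fun u => u.length) ?_ ?_ ?_ ?_ ?_
    · intro i hi
      exact Finset.mem_filter.mpr ⟨hpre v hvN _ (List.take_prefix i v), List.take_prefix i v⟩
    · intro u hu
      simp only [Finset.mem_filter] at hu
      have := hu.2.length_le
      simp only [Finset.mem_range]
      omega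
    · intro i hi
      simp only [Finset.mem_range] at hi
      simp only [List.length_take]
      omega
    · intro u hu
      simp only [Finset.mem_filter] at hu
      exact (List.prefix_iff_eq_take.mp hu.2).symm
    · intro i hi
      have hi' : i < v.length + 1 := Finset.mem_range.mp hi
      rw [List.length_take, min_eq_left (by omega)]
  rw [Finset.sum_congr rfl (fun v hv => by rw [step1 v hv])]
  have swap : ∑ v ∈ leaves k N, (1/(k:ℝ))^v.length *
        ∑ u ∈ N.filter (fun u => u <+: v), (k:ℝ) ^ u.length * w u
      = ∑ u ∈ N, (k:ℝ)^u.length * w u *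
        ∑ v ∈ (leaves k N).filter (fun v => u <+: v), (1/(k:ℝ))^v.length := by
    simp only [Finset.sum_filter, Finset.mul_sum, mul_ite, mul_zero]
    rw [Finset.sum_comm]
    refine Finset.sum_congr rfl fun u _ => Finset.sum_congr rfl fun v _ => ?_
    by_cases h : u <+: v <;> simp [h]; ring
  rw [swap]
  rw [Finset.sum_congr rfl (fun u hu => by
    rw [key k hk N ⟨hroot, hpre, hfull⟩ u hu])]
  refine Finset.sum_congr rfl (fun u hu => ?_)
  rw [one_div, inv_pow]
  field_simp
end

section
/- (Knuth's theorem, subtree/conditional form.) Let k ≥ 1, let N be a finite full k-ary tree, let w : List (Fin k) → ℝ be node weights, and let n ∈ N be a node of depth d = |n|. Then, conditional on the uniformly random root-to-leaf path passing through n, the expectation of ∑ k^{|u|−d} w(u) over the nodes u on the path from n to the leaf is the total weight of the subtree rooted at n. Formally: ∑_{v ∈ Leaves(N), n prefix of v} k^{d−|v|} · ( ∑_{u with n prefix of u and u prefix of v} k^{|u|−d} w(u) ) = ∑_{m ∈ N, n prefix of m} w(m), with all sums over the real numbers. -/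
lemma leafsum (k : ℕ) (hk : 1 ≤ k) (N : Finset (List (Fin k))) (hN : IsFullTree k N) :
    ∀ u ∈ N, ∑ v ∈ (leaves k N).filter (fun v => u <+: v),
      (k : ℝ) ^ ((u.length : ℤ) - (v.length : ℤ)) = 1 := by
  obtain ⟨hroot, hpre, hfull⟩ := hN
  have hk0 : (k : ℝ) ≠ 0 := by
    simp only [ne_eq, Nat.cast_eq_zero]; omega
  suffices H : ∀ c : ℕ, ∀ u ∈ N, (N.filter (fun m => u <+: m)).card ≤ c →
      ∑ v ∈ (leaves k N).filter (fun v => u <+: v),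
        (k : ℝ) ^ ((u.length : ℤ) - (v.length : ℤ)) = 1 by
    intro u hu; exact H _ u hu le_rfl
  intro c
  induction c with
  | zero =>
    intro u hu hc
    exfalso
    have : u ∈ N.filter (fun m => u <+: m) := by
      simp [Finset.mem_filter, hu]
    have := Finset.card_pos.mpr ⟨u, this⟩
    omega
  | succ c ih =>
    intro u hu hc
    rcases hfull u hu with hint | hleaf
    · -- internal node
      have hne : ∀ v ∈ leaves k N, u <+: v → v ≠ u := by
        intro v hv hpv h
        rw [leaves, Finset.mem_filter] at hv
        exact hv.2 ⟨0, by omega⟩ (h ▸ hint ⟨0, by omega⟩)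
      have hpart : (leaves k N).filter (fun v => u <+: v)
          = Finset.univ.biUnion (fun i : Fin k => (leaves k N).filter (fun v => u ++ [i] <+: v)) := by
        ext v
        simp only [Finset.mem_biUnion, Finset.mem_filter, Finset.mem_univ, true_and]
        constructor
        · rintro ⟨hv, t, rfl⟩
          have ht : t ≠ [] := by
            rintro rfl
            exact hne _ hv ⟨[], by simp⟩ (by simp)
          obtain ⟨i, t', rfl⟩ := List.exists_cons_of_ne_nil ht
          exact ⟨i, hv, t', by simp⟩
        · rintro ⟨i, hv, hp⟩
          exact ⟨hv, (List.prefix_append u [i]).trans hp⟩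
      have hdisj : ∀ i ∈ (Finset.univ : Finset (Fin k)), ∀ j ∈ Finset.univ, i ≠ j →
          Disjoint ((leaves k N).filter (fun v => u ++ [i] <+: v))
            ((leaves k N).filter (fun v => u ++ [j] <+: v)) := by
        intro i _ j _ hij
        rw [Finset.disjoint_left]
        intro v hvi hvj
        rw [Finset.mem_filter] at hvi hvj
        rcases (List.prefix_or_prefix_of_prefix hvi.2 hvj.2) with h | h
        · have := h.eq_of_length (by simp)
          apply hij; simpa using (List.append_cancel_left this)
        · have := h.eq_of_length (by simp)
          apply hij; symm; simpa using (List.append_cancel_left this)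
      rw [hpart, Finset.sum_biUnion]
      · have hterm : ∀ i : Fin k,
            ∑ v ∈ (leaves k N).filter (fun v => u ++ [i] <+: v),
              (k : ℝ) ^ ((u.length : ℤ) - (v.length : ℤ)) = (k : ℝ)⁻¹ := by
          intro i
          have hmem : u ++ [i] ∈ N := hint i
          have hcard : (N.filter (fun m => u ++ [i] <+: m)).card ≤ c := by
            have hss : N.filter (fun m => u ++ [i] <+: m) ⊂ N.filter (fun m => u <+: m) := by
              constructor
              · intro m hm
                rw [Finset.mem_filter] at hm ⊢
                exact ⟨hm.1, (List.prefix_append u [i]).trans hm.2⟩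
              · intro hsub
                have hu' : u ∈ N.filter (fun m => u <+: m) := by
                  simp [Finset.mem_filter, hu]
                have := hsub hu'
                rw [Finset.mem_filter] at this
                have := this.2.length_le
                simp at this
            have := Finset.card_lt_card hss
            omega
          have h1 := ih (u ++ [i]) hmem hcard
          calc ∑ v ∈ (leaves k N).filter (fun v => u ++ [i] <+: v),
                (k : ℝ) ^ ((u.length : ℤ) - (v.length : ℤ))
              = ∑ v ∈ (leaves k N).filter (fun v => u ++ [i] <+: v),
                (k : ℝ)⁻¹ * (k : ℝ) ^ (((u ++ [i]).length : ℤ) - (v.length : ℤ)) := by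
                apply Finset.sum_congr rfl
                intro v _
                rw [← zpow_neg_one, ← zpow_add₀ hk0]
                congr 1
                simp
                ring
            _ = (k : ℝ)⁻¹ := by rw [← Finset.mul_sum, h1, mul_one]
        rw [Finset.sum_congr rfl (fun i _ => hterm i)]
        simp only [Finset.sum_const, Finset.card_univ, Fintype.card_fin, nsmul_eq_mul]
        field_simp
      · exact hdisj
    · -- leaf
      have : (leaves k N).filter (fun v => u <+: v) = {u} := by
        ext v
        simp only [Finset.mem_filter, Finset.mem_singleton]
        constructor
        · rintro ⟨hv, t, rfl⟩
          rw [leaves, Finset.mem_filter] at hv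
          rcases t with _ | ⟨i, t'⟩
          · simp
          · exfalso
            exact hleaf i (hpre _ hv.1 _ ⟨t', by simp⟩)
        · intro h
          subst h
          exact ⟨by rw [leaves, Finset.mem_filter]; exact ⟨hu, hleaf⟩, List.prefix_refl _⟩
      rw [this]
      simp


/-- Knuth's theorem, subtree/conditional form: conditional on the random
root-to-leaf path passing through a node `n` of depth `d = |n|`, the expectation
of `∑ k^{|u|-d} w(u)` over the nodes `u` on the path from `n` to the leaf equals
the total weight of the subtree rooted at `n`. -/
theorem knuth_theorem_subtree (k : ℕ) (hk : 1 ≤ k)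
    (N : Finset (List (Fin k))) (hN : IsFullTree k N)
    (w : List (Fin k) → ℝ) (n : List (Fin k)) (hn : n ∈ N) :
    ∑ v ∈ (leaves k N).filter (fun v => n <+: v),
        (k : ℝ) ^ ((n.length : ℤ) - (v.length : ℤ)) *
          (∑ u ∈ N.filter (fun u => n <+: u ∧ u <+: v),
            (k : ℝ) ^ ((u.length : ℤ) - (n.length : ℤ)) * w u)
      = ∑ m ∈ N.filter (fun m => n <+: m), w m := by
  have hk0 : (k : ℝ) ≠ 0 := by
    simp only [ne_eq, Nat.cast_eq_zero]; omega
  calc ∑ v ∈ (leaves k N).filter (fun v => n <+: v),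
        (k : ℝ) ^ ((n.length : ℤ) - (v.length : ℤ)) *
          (∑ u ∈ N.filter (fun u => n <+: u ∧ u <+: v),
            (k : ℝ) ^ ((u.length : ℤ) - (n.length : ℤ)) * w u)
      = ∑ v ∈ (leaves k N).filter (fun v => n <+: v),
          ∑ u ∈ N.filter (fun u => n <+: u ∧ u <+: v),
            (k : ℝ) ^ ((u.length : ℤ) - (v.length : ℤ)) * w u := by
        apply Finset.sum_congr rfl
        intro v hv
        rw [Finset.mul_sum]
        apply Finset.sum_congr rfl
        intro u hu
        rw [← mul_assoc, ← zpow_add₀ hk0]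
        ring_nf
    _ = ∑ u ∈ N.filter (fun m => n <+: m),
          ∑ v ∈ (leaves k N).filter (fun v => u <+: v),
            (k : ℝ) ^ ((u.length : ℤ) - (v.length : ℤ)) * w u := by
        apply Finset.sum_comm'
        intro v u
        simp only [Finset.mem_filter]
        constructor
        · rintro ⟨⟨hv, hnv⟩, hu, hnu, huv⟩
          exact ⟨⟨hv, huv⟩, hu, hnu⟩
        · rintro ⟨⟨hv, huv⟩, hu, hnu⟩
          exact ⟨⟨hv, hnu.trans huv⟩, hu, hnu, huv⟩
    _ = ∑ m ∈ N.filter (fun m => n <+: m), w m := by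
        apply Finset.sum_congr rfl
        intro u hu
        rw [Finset.mem_filter] at hu
        rw [← Finset.sum_mul, leafsum k hk N hN u hu.1, one_mul]
end

section
/- (Unit-weight corollary of Knuth's theorem: unbiased node-count estimation.) Let k ≥ 2 and let N be a finite full k-ary tree. Then the expectation, over a uniformly random root-to-leaf path of length ℓ, of the quantity (k^{ℓ+1} − 1)/(k − 1) = ∑_{i=0}^{ℓ} k^{i} equals the number of nodes of the tree. Formally: ∑_{v ∈ Leaves(N)} (1/k)^{|v|} · (k^{|v|+1} − 1)/(k − 1) = |N| (as real numbers). -/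
namespace KnuthAux

variable {k : ℕ}

def child (i : Fin k) (N : Finset (List (Fin k))) : Finset (List (Fin k)) :=
  (N.filter (fun n => n.head? = some i)).image List.tail

lemma mem_child {i : Fin k} {N : Finset (List (Fin k))} {m : List (Fin k)} :
    m ∈ child i N ↔ i :: m ∈ N := by
  constructor
  · intro hm
    simp only [child, Finset.mem_image, Finset.mem_filter] at hm
    obtain ⟨n, ⟨hn, hh⟩, ht⟩ := hm
    cases n with
    | nil => simp at hh
    | cons a t =>
      simp only [List.head?_cons, Option.some.injEq] at hh
      simp only [List.tail_cons] at ht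
      subst hh; subst ht; exact hn
  · intro h
    simp only [child, Finset.mem_image, Finset.mem_filter]
    exact ⟨i :: m, ⟨h, rfl⟩, rfl⟩

lemma isFullTree_child {N : Finset (List (Fin k))} (hN : IsFullTree k N) {i : Fin k}
    (hi : ([i] : List (Fin k)) ∈ N) : IsFullTree k (child i N) := by
  obtain ⟨h0, hpre, hfull⟩ := hN
  refine ⟨mem_child.2 hi, ?_, ?_⟩
  · intro n hn m hm
    refine mem_child.2 (hpre _ (mem_child.1 hn) _ ?_)
    obtain ⟨t, ht⟩ := hm
    exact ⟨t, by simp [← ht]⟩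
  · intro n hn
    rcases hfull _ (mem_child.1 hn) with h | h
    · exact Or.inl fun j => mem_child.2 (by simpa using h j)
    · exact Or.inr fun j hj => h j (by simpa using mem_child.1 hj)

lemma nil_of_root_leaf {N : Finset (List (Fin k))} (hN : IsFullTree k N)
    (h : ∀ i : Fin k, ([i] : List (Fin k)) ∉ N) : N = {[]} := by
  obtain ⟨h0, hpre, _⟩ := hN
  ext n
  simp only [Finset.mem_singleton]
  constructor
  · intro hn
    cases n with
    | nil => rfl
    | cons a t => exact absurd (hpre _ hn [a] ⟨t, rfl⟩) (h a)
  · rintro rfl; exact h0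

lemma decomp {N : Finset (List (Fin k))} (hN : IsFullTree k N)
    (hi : ∀ j : Fin k, ([j] : List (Fin k)) ∈ N) :
    N = insert [] (Finset.univ.biUnion fun i => (child i N).image (i :: ·)) := by
  ext n
  simp only [Finset.mem_insert, Finset.mem_biUnion, Finset.mem_image, Finset.mem_univ,
    true_and]
  constructor
  · intro hn
    cases n with
    | nil => exact Or.inl rfl
    | cons a t => exact Or.inr ⟨a, t, mem_child.2 hn, rfl⟩
  · rintro (rfl | ⟨i, m, hm, rfl⟩)
    · exact hN.1
    · exact mem_child.1 hm

lemma disj (N : Finset (List (Fin k))) :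
    Set.PairwiseDisjoint (Finset.univ : Finset (Fin k))
      (fun i => (child i N).image (i :: ·)) := by
  intro a _ b _ hab
  simp only [Function.onFun, Finset.disjoint_left, Finset.mem_image]
  rintro x ⟨m, _, rfl⟩ ⟨m', _, h⟩
  exact hab (by injection h with h1 _; exact h1.symm)

lemma cons_inj (i : Fin k) : Function.Injective (fun m : List (Fin k) => i :: m) :=
  fun a b h => by injection h

lemma card_eq {N : Finset (List (Fin k))} (hN : IsFullTree k N)
    (hi : ∀ j : Fin k, ([j] : List (Fin k)) ∈ N) :
    N.card = 1 + ∑ i : Fin k, (child i N).card := by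
  conv_lhs => rw [decomp hN hi]
  rw [Finset.card_insert_of_notMem, Finset.card_biUnion]
  · rw [Finset.sum_congr rfl fun i _ =>
      Finset.card_image_of_injective (child i N) (cons_inj i), add_comm]
  · exact fun a _ b _ hab => disj N (Finset.mem_univ a) (Finset.mem_univ b) hab
  · simp only [Finset.mem_biUnion, Finset.mem_image]
    rintro ⟨i, _, m, _, h⟩
    exact List.cons_ne_nil _ _ h

lemma child_card_lt {N : Finset (List (Fin k))} (hN : IsFullTree k N)
    (hi : ∀ j : Fin k, ([j] : List (Fin k)) ∈ N) (i : Fin k) :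
    (child i N).card < N.card := by
  have h1 : ((child i N).image (i :: ·)).card = (child i N).card :=
    Finset.card_image_of_injective _ (fun a b h => by injection h)
  have h2 : (child i N).image (i :: ·) ⊆ N.erase [] := by
    intro x hx
    simp only [Finset.mem_image] at hx
    obtain ⟨m, hm, rfl⟩ := hx
    exact Finset.mem_erase.2 ⟨List.cons_ne_nil _ _, mem_child.1 hm⟩
  calc (child i N).card = ((child i N).image (i :: ·)).card := h1.symm
    _ ≤ (N.erase []).card := Finset.card_le_card h2
    _ < N.card := Finset.card_erase_lt_of_mem hN.1

lemma leaves_decomp (hk : 2 ≤ k) {N : Finset (List (Fin k))} (hN : IsFullTree k N)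
    (hi : ∀ j : Fin k, ([j] : List (Fin k)) ∈ N) :
    leaves k N = Finset.univ.biUnion fun i => (leaves k (child i N)).image (i :: ·) := by
  ext n
  simp only [leaves, Finset.mem_biUnion, Finset.mem_image, Finset.mem_univ, true_and,
    Finset.mem_filter]
  constructor
  · rintro ⟨hn, hleaf⟩
    cases n with
    | nil => exact absurd (hi ⟨0, by omega⟩) (by simpa using hleaf ⟨0, by omega⟩)
    | cons a t =>
      refine ⟨a, t, ⟨mem_child.2 hn, fun j hj => hleaf j (by simpa using mem_child.1 hj)⟩, rfl⟩
  · rintro ⟨i, m, ⟨hm, hleaf⟩, rfl⟩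
    exact ⟨mem_child.1 hm, fun j hj => hleaf j (mem_child.2 (by simpa using hj))⟩

lemma main (hk : 2 ≤ k) : ∀ n : ℕ, ∀ N : Finset (List (Fin k)), N.card = n →
    IsFullTree k N →
    (∑ v ∈ leaves k N, (1 / (k : ℝ)) ^ v.length = 1) ∧
    (∑ v ∈ leaves k N, (1 / (k : ℝ)) ^ v.length *
        (((k : ℝ) ^ (v.length + 1) - 1) / ((k : ℝ) - 1)) = (N.card : ℝ)) := by
  have hk0 : (k : ℝ) ≠ 0 := by
    have : (2 : ℝ) ≤ k := by exact_mod_cast hk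
    linarith
  have hk1 : (k : ℝ) - 1 ≠ 0 := by
    have : (2 : ℝ) ≤ k := by exact_mod_cast hk
    intro h; linarith
  intro n
  induction n using Nat.strong_induction_on with
  | _ n ih =>
    intro N hcard hN
    rcases hN.2.2 [] hN.1 with hi | hi
    · -- root internal
      simp only [List.nil_append] at hi
      have hL := leaves_decomp hk hN hi
      have hdisj : ∀ a ∈ (Finset.univ : Finset (Fin k)), ∀ b ∈ Finset.univ, a ≠ b →
          Disjoint ((leaves k (child a N)).image (a :: ·))
            ((leaves k (child b N)).image (b :: ·)) := by
        intro a _ b _ hab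
        simp only [Finset.disjoint_left, Finset.mem_image]
        rintro x ⟨m, _, rfl⟩ ⟨m', _, h⟩
        exact hab (by injection h with h1 _; exact h1.symm)
      have hIH : ∀ i : Fin k,
          (∑ v ∈ leaves k (child i N), (1 / (k : ℝ)) ^ v.length = 1) ∧
          (∑ v ∈ leaves k (child i N), (1 / (k : ℝ)) ^ v.length *
              (((k : ℝ) ^ (v.length + 1) - 1) / ((k : ℝ) - 1)) = ((child i N).card : ℝ)) := by
        intro i
        exact ih (child i N).card (hcard ▸ child_card_lt hN hi i) _ rfl
          (isFullTree_child hN (hi i))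
      have hmass : ∀ i : Fin k,
          ∑ v ∈ (leaves k (child i N)).image (i :: ·), (1 / (k : ℝ)) ^ v.length
            = 1 / (k : ℝ) := by
        intro i
        rw [Finset.sum_image (fun a _ b _ h => cons_inj i h)]
        have : ∀ m ∈ leaves k (child i N),
            (1 / (k : ℝ)) ^ (i :: m).length = (1 / (k : ℝ)) * (1 / (k : ℝ)) ^ m.length := by
          intro m _; rw [List.length_cons]; ring
        rw [Finset.sum_congr rfl this, ← Finset.mul_sum, (hIH i).1, mul_one]
      have hpd : Set.PairwiseDisjoint (↑(Finset.univ : Finset (Fin k)))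
          (fun i => (leaves k (child i N)).image (i :: ·)) :=
        fun a ha b hb hab => hdisj a (Finset.mem_univ a) b (Finset.mem_univ b) hab
      constructor
      · rw [hL, Finset.sum_biUnion hpd, Finset.sum_congr rfl fun i _ => hmass i]
        simp only [Finset.sum_const, Finset.card_univ, Fintype.card_fin, nsmul_eq_mul]
        field_simp
      · have hterm : ∀ i : Fin k,
            ∑ v ∈ (leaves k (child i N)).image (i :: ·), (1 / (k : ℝ)) ^ v.length *
              (((k : ℝ) ^ (v.length + 1) - 1) / ((k : ℝ) - 1))
              = ((child i N).card : ℝ) + 1 / (k : ℝ) := by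
          intro i
          rw [Finset.sum_image (fun a _ b _ h => cons_inj i h)]
          have key : ∀ m ∈ leaves k (child i N),
              (1 / (k : ℝ)) ^ (i :: m).length *
                (((k : ℝ) ^ ((i :: m).length + 1) - 1) / ((k : ℝ) - 1))
              = (1 / (k : ℝ)) ^ m.length *
                (((k : ℝ) ^ (m.length + 1) - 1) / ((k : ℝ) - 1))
                + (1 / (k : ℝ)) * (1 / (k : ℝ)) ^ m.length := by
            intro m _
            rw [List.length_cons]
            field_simp
            linear_combination (-((k : ℝ)⁻¹) ^ m.length + (k : ℝ) ^ 2 * (k : ℝ) ^ m.length * ((k : ℝ)⁻¹) ^ m.length) * (mul_inv_cancel₀ hk0)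
          rw [Finset.sum_congr rfl key, Finset.sum_add_distrib, (hIH i).2,
            ← Finset.mul_sum, (hIH i).1, mul_one]
        rw [hL, Finset.sum_biUnion hpd, Finset.sum_congr rfl fun i _ => hterm i,
          Finset.sum_add_distrib]
        simp only [Finset.sum_const, Finset.card_univ, Fintype.card_fin, nsmul_eq_mul]
        rw [card_eq hN hi]
        push_cast
        field_simp
        ring
    · -- root is a leaf
      simp only [List.nil_append] at hi
      have hNe : N = {[]} := nil_of_root_leaf hN hi
      have hLe : leaves k N = {[]} := by
        rw [hNe]; ext n
        simp only [leaves, Finset.mem_filter, Finset.mem_singleton]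
        constructor
        · rintro ⟨h, _⟩; exact h
        · rintro rfl
          exact ⟨rfl, fun i h => by simp at h⟩
      constructor
      · simp [hLe]
      · rw [hLe, hNe]
        simp only [Finset.sum_singleton, List.length_nil, pow_zero, one_mul, pow_one,
          Finset.card_singleton, Nat.cast_one]
        field_simp
        ring

end KnuthAux


/-- Unit-weight corollary of Knuth's theorem: the expectation over a uniformly
random root-to-leaf path of length `ℓ = |v|` of `(k^{ℓ+1} - 1)/(k - 1)` equals
the number of nodes of the tree. -/
theorem knuth_unit_weight (k : ℕ) (hk : 2 ≤ k)
    (N : Finset (List (Fin k))) (hN : IsFullTree k N) :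
    ∑ v ∈ leaves k N, (1 / (k : ℝ)) ^ v.length *
        (((k : ℝ) ^ (v.length + 1) - 1) / ((k : ℝ) - 1))
      = (N.card : ℝ) := by
  exact (KnuthAux.main hk N.card N rfl hN).2
end

section
/- (Binary Knuth sampling for DPLL proof trees.) Let N be a finite full binary tree (k = 2). Then the expectation, over a uniformly random root-to-leaf path of length ℓ, of 2^{ℓ+1} − 1 equals the number of nodes of the tree: ∑_{v ∈ Leaves(N)} (1/2)^{|v|} · (2^{|v|+1} − 1) = |N| (as real numbers). (In a DPLL solver, this says that replacing a complete traversal of the binary tree of all True/False assignments by a single uniformly random root-to-conflict path of length ℓ yields 2^{ℓ+1} − 1 as an unbiased estimate of the proof-tree size.) -/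
def childSet (N : Finset (List (Fin 2))) (i : Fin 2) : Finset (List (Fin 2)) :=
  (N.filter (fun n => n.head? = some i)).image List.tail

lemma mem_childSet {N : Finset (List (Fin 2))} {i : Fin 2} {m : List (Fin 2)} :
    m ∈ childSet N i ↔ (i :: m) ∈ N := by
  simp only [childSet, Finset.mem_image, Finset.mem_filter]
  constructor
  · rintro ⟨n, ⟨hn, hh⟩, rfl⟩
    rwa [List.cons_head?_tail hh]
  · intro h; exact ⟨i :: m, ⟨h, rfl⟩, rfl⟩

lemma childSet_full {N : Finset (List (Fin 2))} (hN : IsFullTree 2 N) (i : Fin 2)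
    (hi : [i] ∈ N) : IsFullTree 2 (childSet N i) := by
  obtain ⟨hroot, hpre, hch⟩ := hN
  refine ⟨mem_childSet.2 hi, ?_, ?_⟩
  · intro n hn m hm
    exact mem_childSet.2 (hpre _ (mem_childSet.1 hn) _ ((List.prefix_cons_inj i).2 hm))
  · intro n hn
    rcases hch _ (mem_childSet.1 hn) with h | h
    · exact Or.inl fun j => mem_childSet.2 (by simpa using h j)
    · exact Or.inr fun j hj => h j (by simpa using mem_childSet.1 hj)

lemma childSet_card_lt {N : Finset (List (Fin 2))} (hN : IsFullTree 2 N) (i : Fin 2) :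
    (childSet N i).card < N.card := by
  have hsub : (childSet N i).image (i :: ·) ⊆ N := by
    intro n hn
    obtain ⟨m, hm, rfl⟩ := Finset.mem_image.1 hn
    exact mem_childSet.1 hm
  have hinj : Set.InjOn (i :: ·) (childSet N i) := fun a _ b _ h => by
    simpa using h
  have hcard : ((childSet N i).image (i :: ·)).card = (childSet N i).card :=
    Finset.card_image_of_injOn hinj
  have hne : ([] : List (Fin 2)) ∉ (childSet N i).image (i :: ·) := by
    simp
  calc (childSet N i).card = ((childSet N i).image (i :: ·)).card := hcard.symm
    _ < (insert ([] : List (Fin 2)) ((childSet N i).image (i :: ·))).card := by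
        rw [Finset.card_insert_of_notMem hne]; omega
    _ ≤ N.card := Finset.card_le_card (Finset.insert_subset hN.1 hsub)

lemma key_s7 : ∀ (n : ℕ) (N : Finset (List (Fin 2))), N.card ≤ n → IsFullTree 2 N →
    (∑ v ∈ leaves 2 N, (1 / 2 : ℝ) ^ v.length = 1) ∧
    N.card + 1 = 2 * (leaves 2 N).card := by
  intro n
  induction n with
  | zero =>
    intro N hcard hN
    exact absurd (Finset.card_pos.2 ⟨_, hN.1⟩) (by omega)
  | succ n ih =>
  intro N hcard hN
  obtain ⟨hroot, hpre, hch⟩ := hN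
  rcases hch _ hroot with hint | hleaf
  · -- root internal: decompose
    have h0 : [(0 : Fin 2)] ∈ N := by simpa using hint 0
    have h1 : [(1 : Fin 2)] ∈ N := by simpa using hint 1
    set N0 := childSet N 0 with hN0
    set N1 := childSet N 1 with hN1
    have hf0 := childSet_full ⟨hroot, hpre, hch⟩ 0 h0
    have hf1 := childSet_full ⟨hroot, hpre, hch⟩ 1 h1
    have hlt0 := childSet_card_lt ⟨hroot, hpre, hch⟩ 0
    have hlt1 := childSet_card_lt ⟨hroot, hpre, hch⟩ 1
    obtain ⟨hk0, hc0⟩ := ih N0 (by rw [hN0]; omega) hf0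
    obtain ⟨hk1, hc1⟩ := ih N1 (by rw [hN1]; omega) hf1
    -- decomposition of N
    have hNdec : N = insert [] ((N0.image ((0 : Fin 2) :: ·)) ∪ (N1.image ((1 : Fin 2) :: ·))) := by
      ext n
      simp only [Finset.mem_insert, Finset.mem_union, Finset.mem_image]
      constructor
      · intro hn
        cases n with
        | nil => exact Or.inl rfl
        | cons j m =>
          refine Or.inr ?_
          fin_cases j
          · exact Or.inl ⟨m, mem_childSet.2 hn, rfl⟩
          · exact Or.inr ⟨m, mem_childSet.2 hn, rfl⟩
      · rintro (rfl | ⟨m, hm, rfl⟩ | ⟨m, hm, rfl⟩)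
        · exact hroot
        · exact mem_childSet.1 hm
        · exact mem_childSet.1 hm
    -- leaves decomposition
    have hLdec : leaves 2 N =
        ((leaves 2 N0).image ((0 : Fin 2) :: ·)) ∪ ((leaves 2 N1).image ((1 : Fin 2) :: ·)) := by
      ext n
      simp only [leaves, Finset.mem_union, Finset.mem_image, Finset.mem_filter]
      constructor
      · rintro ⟨hn, hl⟩
        cases n with
        | nil => exact absurd (by simpa using h0) (by simpa using hl 0)
        | cons j m =>
          have hml : ∀ i : Fin 2, m ++ [i] ∉ childSet N j := fun i hi =>
            hl i (by simpa using mem_childSet.1 hi)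
          fin_cases j
          · exact Or.inl ⟨m, ⟨mem_childSet.2 hn, hml⟩, rfl⟩
          · exact Or.inr ⟨m, ⟨mem_childSet.2 hn, hml⟩, rfl⟩
      · rintro (⟨m, ⟨hm, hml⟩, rfl⟩ | ⟨m, ⟨hm, hml⟩, rfl⟩) <;>
          exact ⟨mem_childSet.1 hm, fun i hi => hml i (mem_childSet.2 (by simpa using hi))⟩
    have hdisj : Disjoint ((leaves 2 N0).image ((0 : Fin 2) :: ·))
        ((leaves 2 N1).image ((1 : Fin 2) :: ·)) := by
      rw [Finset.disjoint_left]
      rintro n hn0 hn1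
      obtain ⟨a, _, rfl⟩ := Finset.mem_image.1 hn0
      obtain ⟨b, _, hb⟩ := Finset.mem_image.1 hn1
      simp at hb
    have hinj0 : Set.InjOn ((0 : Fin 2) :: ·) (leaves 2 N0) := fun a _ b _ h => by simpa using h
    have hinj1 : Set.InjOn ((1 : Fin 2) :: ·) (leaves 2 N1) := fun a _ b _ h => by simpa using h
    constructor
    · rw [hLdec, Finset.sum_union hdisj, Finset.sum_image hinj0, Finset.sum_image hinj1]
      simp only [List.length_cons, pow_succ]
      rw [← Finset.sum_mul, ← Finset.sum_mul, hk0, hk1]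
      norm_num
    · have hdisj2 : Disjoint (N0.image ((0 : Fin 2) :: ·)) (N1.image ((1 : Fin 2) :: ·)) := by
        rw [Finset.disjoint_left]
        rintro n hn0 hn1
        obtain ⟨a, _, rfl⟩ := Finset.mem_image.1 hn0
        obtain ⟨b, _, hb⟩ := Finset.mem_image.1 hn1
        simp at hb
      have hnil : ([] : List (Fin 2)) ∉ (N0.image ((0 : Fin 2) :: ·)) ∪ (N1.image ((1 : Fin 2) :: ·)) := by
        simp
      rw [hLdec, Finset.card_union_of_disjoint hdisj,
        Finset.card_image_of_injOn hinj0, Finset.card_image_of_injOn hinj1]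
      conv_lhs => rw [hNdec]
      rw [Finset.card_insert_of_notMem hnil, Finset.card_union_of_disjoint hdisj2,
        Finset.card_image_of_injOn (fun a _ b _ h => by simpa using h),
        Finset.card_image_of_injOn (fun a _ b _ h => by simpa using h)]
      omega
  · -- root is a leaf: N = {[]}
    have hNeq : N = {[]} := by
      ext n
      simp only [Finset.mem_singleton]
      constructor
      · intro hn
        cases n with
        | nil => rfl
        | cons j m => exact absurd (hpre _ hn [j] ⟨m, rfl⟩) (by simpa using hleaf j)
      · rintro rfl; exact hroot
    subst hNeq
    have : leaves 2 ({[]} : Finset (List (Fin 2))) = {[]} := by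
      ext n
      simp only [leaves, Finset.mem_filter, Finset.mem_singleton]
      constructor
      · rintro ⟨h, _⟩; exact h
      · rintro rfl; exact ⟨rfl, by simp⟩
    rw [this]
    simp

/-- Binary Knuth sampling for DPLL proof trees: the expectation, over a uniformly
random root-to-leaf path of length `ℓ = |v|`, of `2^{ℓ+1} - 1` equals the number
of nodes of the tree. -/
theorem binary_knuth_sampling (N : Finset (List (Fin 2))) (hN : IsFullTree 2 N) :
    ∑ v ∈ leaves 2 N, (1 / 2 : ℝ) ^ v.length * ((2 : ℝ) ^ (v.length + 1) - 1)
      = (N.card : ℝ) := by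
  obtain ⟨hk, hc⟩ := key_s7 N.card N le_rfl hN
  have heq : ∀ v ∈ leaves 2 N, (1 / 2 : ℝ) ^ v.length * ((2 : ℝ) ^ (v.length + 1) - 1)
      = 2 - (1 / 2 : ℝ) ^ v.length := by
    intro v _
    have : (1 / 2 : ℝ) ^ v.length * (2 : ℝ) ^ v.length = 1 := by
      rw [← mul_pow]; norm_num
    rw [pow_succ]
    ring_nf
    nlinarith [this]
  rw [Finset.sum_congr rfl heq, Finset.sum_sub_distrib, Finset.sum_const, hk, nsmul_eq_mul]
  have : ((N.card : ℝ) + 1) = 2 * ((leaves 2 N).card : ℝ) := by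
    exact_mod_cast congrArg (Nat.cast : ℕ → ℝ) hc
  linarith [this]
end
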